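/- arXiv:1402.3617 — 2 statements merged into one kernel-verified Lean document; each statement's English description precedes it below -/
import Mathlib

section
/- Fix γ > 0, λ > 0, and for y ∈ ℤ let S_y act on functions f : ℝ^ℤ → ℝ by (S_y f)(ω) = γ(f(ω^y) − f(ω)) + λ(f(ω^{y,y+1}) − f(ω)). Then for every x ∈ ℤ, every integer k ≥ 1, and every ω ∈ ℝ^ℤ: ω_x ω_{x+k} = S_x(h₀)(ω) + Σ_{ℓ=1}^{k−1} S_{x+ℓ}(h_ℓ)(ω), where h₀(ω) = −ω_x ω_{x+1}/(2γ) and, for 1 ≤ ℓ ≤ k−1, h_ℓ(ω) = −ω_x ω_{x+ℓ+1}/λ. In particular every monomial ω_x ω_{x+k} lies in the range of the symmetric part of the generator. -/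
noncomputable section

/-- Flip of the coordinate at site `y`: `ω_y ↦ −ω_y`. -/
def flipAt (y : ℤ) (ω : ℤ → ℝ) : ℤ → ℝ := Function.update ω y (-(ω y))

/-- Exchange of the coordinates at sites `y` and `y+1`. -/
def exchAt (y : ℤ) (ω : ℤ → ℝ) : ℤ → ℝ :=
  fun z => if z = y then ω (y + 1) else if z = y + 1 then ω y else ω z

/-- The one-site symmetric operator
`(S_y f)(ω) = γ(f(ω^y) − f(ω)) + λ(f(ω^{y,y+1}) − f(ω))`. -/
def Sy (gam lam : ℝ) (y : ℤ) (f : (ℤ → ℝ) → ℝ) (ω : ℤ → ℝ) : ℝ :=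
  gam * (f (flipAt y ω) - f ω) + lam * (f (exchAt y ω) - f ω)

/-!
The flip at `x` negates `ω_x ω_{x+1}` and the exchange at `x` fixes it, so `S_x` multiplies this
monomial by `-2γ`. For `y > x`, the flip at `y` fixes `ω_x ω_{y+1}` and the exchange at `y` turns
it into `ω_x ω_y`, so `S_y(ω_x ω_{y+1}) = λ(ω_x ω_y - ω_x ω_{y+1})`. Summing over
`y = x+1, …, x+k-1` telescopes to `ω_x ω_{x+k} - ω_x ω_{x+1}`.
-/

section Configurations

variable (y : ℤ) (ω : ℤ → ℝ)

@[simp]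
lemma flipAt_apply_self : flipAt y ω y = -ω y := by
  simp [flipAt]

lemma flipAt_apply_of_ne {y z : ℤ} (h : z ≠ y) : flipAt y ω z = ω z := by
  simp [flipAt, h]

@[simp]
lemma exchAt_apply_left : exchAt y ω y = ω (y + 1) := by
  simp [exchAt]

@[simp]
lemma exchAt_apply_right : exchAt y ω (y + 1) = ω y := by
  simp [exchAt]

lemma exchAt_apply_of_ne {y z : ℤ} (h₁ : z ≠ y) (h₂ : z ≠ y + 1) : exchAt y ω z = ω z := by
  simp [exchAt, h₁, h₂]

end Configurations

lemma Sy_smul (gam lam c : ℝ) (y : ℤ) (f : (ℤ → ℝ) → ℝ) (ω : ℤ → ℝ) :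
    Sy gam lam y (fun ω' => c * f ω') ω = c * Sy gam lam y f ω := by
  simp only [Sy]
  ring

lemma Sy_mul_succ (gam lam : ℝ) (x : ℤ) (ω : ℤ → ℝ) :
    Sy gam lam x (fun ω' => ω' x * ω' (x + 1)) ω = -2 * gam * (ω x * ω (x + 1)) := by
  have hx : x + 1 ≠ x := by omega
  simp only [Sy, flipAt_apply_self, flipAt_apply_of_ne ω hx, exchAt_apply_left,
    exchAt_apply_right]
  ring

lemma Sy_mul_of_lt (gam lam : ℝ) {x y : ℤ} (hxy : x < y) (ω : ℤ → ℝ) :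
    Sy gam lam y (fun ω' => ω' x * ω' (y + 1)) ω = lam * (ω x * ω y - ω x * ω (y + 1)) := by
  have h₁ : x ≠ y := hxy.ne
  have h₂ : x ≠ y + 1 := by omega
  have h₃ : y + 1 ≠ y := by omega
  simp only [Sy, flipAt_apply_of_ne ω h₁, flipAt_apply_of_ne ω h₃, exchAt_apply_of_ne ω h₁ h₂,
    exchAt_apply_right]
  ring

/-- for every `x ∈ ℤ`, every integer `k ≥ 1` and every `ω`,
`ω_x ω_{x+k} = S_x(h₀)(ω) + Σ_{ℓ=1}^{k−1} S_{x+ℓ}(h_ℓ)(ω)`, where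
`h₀(ω) = −ω_x ω_{x+1}/(2γ)` and `h_ℓ(ω) = −ω_x ω_{x+ℓ+1}/λ` for `1 ≤ ℓ ≤ k−1`.
In particular every monomial `ω_x ω_{x+k}` lies in the range of the symmetric part
of the generator. -/
theorem stmt1 (gam lam : ℝ) (hgam : 0 < gam) (hlam : 0 < lam)
    (x : ℤ) (k : ℕ) (hk : 1 ≤ k) (ω : ℤ → ℝ) :
    ω x * ω (x + k) =
      Sy gam lam x (fun ω' => -(ω' x * ω' (x + 1)) / (2 * gam)) ω
        + ∑ l ∈ Finset.Ico 1 k,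
            Sy gam lam (x + l) (fun ω' => -(ω' x * ω' (x + l + 1)) / lam) ω := by
  have h₀ : Sy gam lam x (fun ω' => -(ω' x * ω' (x + 1)) / (2 * gam)) ω = ω x * ω (x + 1) := by
    simp_rw [neg_div, div_eq_inv_mul, ← neg_mul]
    rw [Sy_smul, Sy_mul_succ]
    field_simp
  have hℓ : ∀ l ∈ Finset.Ico 1 k,
      Sy gam lam (x + l) (fun ω' => -(ω' x * ω' (x + l + 1)) / lam) ω
        = ω x * ω (x + ↑(l + 1)) - ω x * ω (x + l) := by
    intro l hl
    have hxl : x < x + l := by rw [Finset.mem_Ico] at hl; omega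
    simp_rw [neg_div, div_eq_inv_mul, ← neg_mul]
    rw [Sy_smul, Sy_mul_of_lt gam lam hxl, Nat.cast_succ, ← add_assoc]
    field_simp
    ring
  rw [h₀, Finset.sum_congr rfl hℓ, Finset.sum_Ico_sub (fun l : ℕ => ω x * ω (x + l)) hk,
    Nat.cast_one]
  ring

end
end

section
/- Let N ≥ 1, β > 0, m : ℤ/Nℤ → (0,∞), and let μ_β^N be the product measure on ℝ^{ℤ/Nℤ} whose coordinates are i.i.d. centered Gaussian with variance β⁻¹. Define, for differentiable F : ℝ^{ℤ/Nℤ} → ℝ, (A^m F)(ω) = Σ_{x∈ℤ/Nℤ} (ω_{x+1}/√(m_x m_{x+1}) − ω_{x−1}/√(m_{x−1} m_x)) ∂F/∂ω_x. Then A^m is antisymmetric in L²(μ_β^N): for all polynomial functions f, g : ℝ^{ℤ/Nℤ} → ℝ, ∫ (A^m f)·g dμ_β^N = − ∫ f·(A^m g) dμ_β^N. -/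
/-!
On polynomials `A^m` acts as the derivation `Σ_x a_x (X_{x+1} ∂_x - X_x ∂_{x+1})` with
`a_x = (m_x m_{x+1})^{-1/2}`, a combination of the infinitesimal rotations `X_y ∂_x - X_x ∂_y`.
For the product Gaussian measure of variance `v`, integration by parts (Stein's identity
`E[X_x p] = v E[∂_x p]`) turns `E[X_y ∂_x p]` into `v⁻¹ E[X_x X_y p]` for `x ≠ y`, which is
symmetric in `x, y`; hence every infinitesimal rotation, and so `A^m`, integrates to zero. The
Leibniz rule `A^m (f g) = (A^m f) g + f (A^m g)` then gives antisymmetry.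
-/

open MeasureTheory ProbabilityTheory

noncomputable section

/-- The antisymmetric (Hamiltonian) part `A^m` of the generator of the disordered
harmonic chain on the discrete torus `ℤ/Nℤ`:
`(A^m F)(ω) = Σ_{x} (ω_{x+1}/√(m_x m_{x+1}) − ω_{x−1}/√(m_{x−1} m_x)) ∂F/∂ω_x`. -/
def AgenTorus (N : ℕ) [NeZero N] (m : ZMod N → ℝ) (F : (ZMod N → ℝ) → ℝ)
    (ω : ZMod N → ℝ) : ℝ :=
  ∑ x : ZMod N,
    (ω (x + 1) / Real.sqrt (m x * m (x + 1)) - ω (x - 1) / Real.sqrt (m (x - 1) * m x)) *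
      deriv (fun t => F (Function.update ω x t)) (ω x)

/-- The product Gaussian measure `μ_β^N` on `ℝ^{ℤ/Nℤ}` whose coordinates are
i.i.d. centered Gaussians with variance `β⁻¹`. -/
def gaussTorus (N : ℕ) [NeZero N] (β : ℝ) : Measure (ZMod N → ℝ) :=
  Measure.pi fun _ : ZMod N => gaussianReal 0 (Real.toNNReal β⁻¹)

open MvPolynomial
open scoped NNReal

namespace ProbabilityTheory

lemma integrable_pow_gaussianReal (μ : ℝ) (v : ℝ≥0) (k : ℕ) :
    Integrable (fun t : ℝ => t ^ k) (gaussianReal μ v) :=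
  integrable_pow_of_mem_interior_integrableExpSet
    (by simp [integrableExpSet_fun_id_gaussianReal]) k

lemma integrable_gaussianReal_iff {μ : ℝ} {v : ℝ≥0} (hv : v ≠ 0) {f : ℝ → ℝ} :
    Integrable f (gaussianReal μ v) ↔ Integrable (fun t => gaussianPDFReal μ v t * f t) := by
  rw [gaussianReal_of_var_ne_zero μ hv, integrable_withDensity_iff_integrable_smul'
    (measurable_gaussianPDF μ v) (ae_of_all _ fun _ => gaussianPDF_lt_top)]
  simp only [toReal_gaussianPDF, smul_eq_mul]

lemma hasDerivAt_gaussianPDFReal_zero (v : ℝ≥0) (t : ℝ) :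
    HasDerivAt (gaussianPDFReal 0 v) (-(t / v) * gaussianPDFReal 0 v t) t := by
  have h : HasDerivAt (fun x : ℝ => -(x - 0) ^ 2 / (2 * v)) (-(2 * t) / (2 * v)) t := by
    simpa using (hasDerivAt_pow 2 t).neg.div_const (2 * (v : ℝ))
  refine (h.exp.const_mul (√(2 * Real.pi * v))⁻¹).congr_deriv ?_
  rw [gaussianPDFReal]
  rcases eq_or_ne (v : ℝ) 0 with hv | hv
  · simp [hv]
  · field_simp

lemma integral_pow_succ_gaussianReal (v : ℝ≥0) (k : ℕ) :
    ∫ t, t ^ (k + 1) ∂gaussianReal 0 v = v * k * ∫ t, t ^ (k - 1) ∂gaussianReal 0 v := by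
  rcases eq_or_ne v 0 with rfl | hv
  · simp
  have hint (j : ℕ) : Integrable (fun t => gaussianPDFReal 0 v t * t ^ j) :=
    (integrable_gaussianReal_iff hv).1 (integrable_pow_gaussianReal 0 v j)
  have ibp := integral_mul_deriv_eq_deriv_mul_of_integrable (u := fun t : ℝ => t ^ k)
    (u' := fun t => k * t ^ (k - 1)) (v := gaussianPDFReal 0 v)
    (v' := fun t => -(t / v) * gaussianPDFReal 0 v t)
    (fun t _ => hasDerivAt_pow k t) (fun t _ => hasDerivAt_gaussianPDFReal_zero v t)
    (((hint (k + 1)).const_mul (-(v : ℝ)⁻¹)).congr (ae_of_all _ fun t => by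
      simp only [Pi.mul_apply]; ring))
    (((hint (k - 1)).const_mul k).congr (ae_of_all _ fun t => by simp only [Pi.mul_apply]; ring))
    ((hint k).congr (ae_of_all _ fun t => mul_comm _ _))
  simp only [integral_gaussianReal_eq_integral_smul hv, smul_eq_mul]
  have hl : ∫ t, t ^ k * (-(t / v) * gaussianPDFReal 0 v t)
      = -(v : ℝ)⁻¹ * ∫ t, gaussianPDFReal 0 v t * t ^ (k + 1) := by
    rw [← integral_const_mul]; congr 1; ext t; ring
  have hr : ∫ t, k * t ^ (k - 1) * gaussianPDFReal 0 v t
      = k * ∫ t, gaussianPDFReal 0 v t * t ^ (k - 1) := by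
    rw [← integral_const_mul]; congr 1; ext t; ring
  rw [hl, hr] at ibp
  have hv' : (v : ℝ) ≠ 0 := by positivity
  field_simp at ibp
  exact neg_inj.mp ibp

section GaussianPi

variable {ι : Type*} [Fintype ι] (v : ℝ≥0)

lemma integral_eval_monomial_gaussianPi (d : ι →₀ ℕ) (c : ℝ) :
    ∫ ω, eval ω (monomial d c) ∂Measure.pi (fun _ => gaussianReal 0 v)
      = c * ∏ i, ∫ t, t ^ d i ∂gaussianReal 0 v := by
  simp only [eval_monomial, Finsupp.prod_fintype _ _ fun _ => pow_zero _, integral_const_mul]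
  rw [integral_fintype_prod_eq_prod (fun i t => t ^ d i)]

lemma integrable_eval_gaussianPi (p : MvPolynomial ι ℝ) :
    Integrable (fun ω => eval ω p) (Measure.pi fun _ => gaussianReal 0 v) := by
  induction p using MvPolynomial.induction_on' with
  | monomial d c =>
    simp only [eval_monomial, Finsupp.prod_fintype _ _ fun _ => pow_zero _]
    exact (Integrable.fintype_prod fun i => integrable_pow_gaussianReal 0 v (d i)).const_mul c
  | add p q hp hq =>
    simp only [map_add]
    exact hp.add hq

variable [DecidableEq ι]

theorem integral_X_mul_eval_gaussianPi (x : ι) (p : MvPolynomial ι ℝ) :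
    ∫ ω, eval ω (X x * p) ∂Measure.pi (fun _ => gaussianReal 0 v)
      = v * ∫ ω, eval ω (pderiv x p) ∂Measure.pi (fun _ => gaussianReal 0 v) := by
  induction p using MvPolynomial.induction_on' with
  | monomial d c =>
    rw [X, monomial_mul, pderiv_monomial, integral_eval_monomial_gaussianPi,
      integral_eval_monomial_gaussianPi, ← Finset.mul_prod_erase _ _ (Finset.mem_univ x),
      ← Finset.mul_prod_erase _ _ (Finset.mem_univ x)]
    have hoff : ∀ i ∈ Finset.univ.erase x,
        (Finsupp.single x 1 + d : ι →₀ ℕ) i = (d - Finsupp.single x 1 : ι →₀ ℕ) i := by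
      intro i hi
      simp [Finsupp.single_eq_of_ne (Finset.ne_of_mem_erase hi)]
    rw [Finset.prod_congr rfl fun i hi =>
      congrArg (fun k => ∫ t, t ^ k ∂gaussianReal 0 v) (hoff i hi)]
    simp only [Finsupp.add_apply, Finsupp.tsub_apply, Finsupp.single_eq_same, add_comm 1,
      integral_pow_succ_gaussianReal]
    ring
  | add p q hp hq =>
    simp only [mul_add, map_add]
    rw [integral_add (integrable_eval_gaussianPi v _) (integrable_eval_gaussianPi v _),
      integral_add (integrable_eval_gaussianPi v _) (integrable_eval_gaussianPi v _), hp, hq,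
      mul_add]

end GaussianPi

end ProbabilityTheory

namespace MvPolynomial

variable {ι : Type*} [DecidableEq ι]

lemma hasDerivAt_eval_update (p : MvPolynomial ι ℝ) (ω : ι → ℝ) (x : ι) (t : ℝ) :
    HasDerivAt (fun s => eval (Function.update ω x s) p)
      (eval (Function.update ω x t) (pderiv x p)) t := by
  induction p using MvPolynomial.induction_on with
  | C a => simpa using hasDerivAt_const t a
  | add p q hp hq =>
    simp only [map_add]
    exact hp.add hq
  | mul_X p i hp =>
    simp only [Derivation.leibniz, map_mul, map_add, smul_eq_mul, eval_X]
    rcases eq_or_ne i x with rfl | hix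
    · simp only [pderiv_X_self, Function.update_self, map_one]
      exact (hp.mul (hasDerivAt_id' t)).congr_deriv (by ring)
    · simp only [pderiv_X_of_ne hix, Function.update_of_ne hix, map_zero]
      exact (hp.mul_const (ω i)).congr_deriv (by ring)

lemma deriv_eval_update (p : MvPolynomial ι ℝ) (ω : ι → ℝ) (x : ι) :
    deriv (fun s => eval (Function.update ω x s) p) (ω x) = eval ω (pderiv x p) := by
  simpa using (hasDerivAt_eval_update p ω x (ω x)).deriv

end MvPolynomial

section Rotation

variable {ι : Type*}

def rotationDerivation (x y : ι) : Derivation ℝ (MvPolynomial ι ℝ) (MvPolynomial ι ℝ) :=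
  (X y : MvPolynomial ι ℝ) • pderiv x - (X x : MvPolynomial ι ℝ) • pderiv y

lemma rotationDerivation_apply (x y : ι) (p : MvPolynomial ι ℝ) :
    rotationDerivation x y p = X y * pderiv x p - X x * pderiv y p := rfl

variable [Fintype ι] [DecidableEq ι]

theorem integral_eval_rotationDerivation {v : ℝ≥0} (hv : v ≠ 0) (x y : ι)
    (p : MvPolynomial ι ℝ) :
    ∫ ω, eval ω (rotationDerivation x y p) ∂Measure.pi (fun _ => gaussianReal 0 v) = 0 := by
  rcases eq_or_ne x y with rfl | hxy
  · simp [rotationDerivation_apply]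
  have hmul_pderiv (x y : ι) (hxy : x ≠ y) : X y * pderiv x p = pderiv x (X y * p) := by
    rw [Derivation.leibniz, pderiv_X_of_ne hxy.symm, smul_zero, add_zero, smul_eq_mul]
  have hscaled : (v : ℝ) *
      ∫ ω, eval ω (rotationDerivation x y p) ∂Measure.pi (fun _ => gaussianReal 0 v) = 0 := by
    simp only [rotationDerivation_apply, map_sub]
    rw [integral_sub (integrable_eval_gaussianPi v _) (integrable_eval_gaussianPi v _), mul_sub,
      hmul_pderiv x y hxy, hmul_pderiv y x hxy.symm, ← integral_X_mul_eval_gaussianPi,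
      ← integral_X_mul_eval_gaussianPi, mul_left_comm, sub_self]
  exact (mul_eq_zero.1 hscaled).resolve_left (mod_cast hv)

end Rotation

section Chain

variable {N : ℕ} [NeZero N]

def chainDerivation (m : ZMod N → ℝ) :
    Derivation ℝ (MvPolynomial (ZMod N) ℝ) (MvPolynomial (ZMod N) ℝ) :=
  ∑ x, (√(m x * m (x + 1)))⁻¹ • rotationDerivation x (x + 1)

lemma chainDerivation_apply (m : ZMod N → ℝ) (p : MvPolynomial (ZMod N) ℝ) :
    chainDerivation m p = ∑ x, (√(m x * m (x + 1)))⁻¹ • rotationDerivation x (x + 1) p := by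
  rw [chainDerivation, ← Derivation.coeFnAddMonoidHom_apply, map_sum, Finset.sum_apply]
  rfl

lemma agenTorus_eval (m : ZMod N → ℝ) (p : MvPolynomial (ZMod N) ℝ) (ω : ZMod N → ℝ) :
    AgenTorus N m (fun w => eval w p) ω = eval ω (chainDerivation m p) := by
  have hshift : ∑ x, ω (x - 1) / √(m (x - 1) * m x) * eval ω (pderiv x p)
      = ∑ x, ω x / √(m x * m (x + 1)) * eval ω (pderiv (x + 1) p) := by
    rw [← Equiv.sum_comp (Equiv.addRight (1 : ZMod N))]
    simp only [Equiv.coe_addRight, add_sub_cancel_right]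
  simp only [AgenTorus, deriv_eval_update, sub_mul, Finset.sum_sub_distrib, hshift,
    chainDerivation_apply, map_sum, smul_eval, rotationDerivation_apply, map_sub, map_mul, eval_X,
    mul_sub]
  congr 1 <;> exact Finset.sum_congr rfl fun x _ => by ring

theorem integral_eval_chainDerivation {v : ℝ≥0} (hv : v ≠ 0) (m : ZMod N → ℝ)
    (p : MvPolynomial (ZMod N) ℝ) :
    ∫ ω, eval ω (chainDerivation m p) ∂Measure.pi (fun _ => gaussianReal 0 v) = 0 := by
  simp only [chainDerivation_apply, map_sum, smul_eval]
  rw [integral_finsetSum _ fun x _ => (integrable_eval_gaussianPi v _).const_mul _]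
  simp [integral_const_mul, integral_eval_rotationDerivation hv]

end Chain

theorem stmt3_general (N : ℕ) [NeZero N] (β : ℝ) (hβ : 0 < β)
    (m : ZMod N → ℝ)
    (f g : MvPolynomial (ZMod N) ℝ) :
    ∫ ω, AgenTorus N m (fun w => MvPolynomial.eval w f) ω * MvPolynomial.eval ω g
        ∂(gaussTorus N β)
      = - ∫ ω, MvPolynomial.eval ω f * AgenTorus N m (fun w => MvPolynomial.eval w g) ω
          ∂(gaussTorus N β) := by
  have hv : Real.toNNReal β⁻¹ ≠ 0 := (Real.toNNReal_pos.2 (inv_pos.2 hβ)).ne'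
  have hleibniz : chainDerivation m f * g + f * chainDerivation m g = chainDerivation m (f * g) := by
    rw [Derivation.leibniz, smul_eq_mul, smul_eq_mul, add_comm, mul_comm g]
  simp only [gaussTorus, agenTorus_eval, ← map_mul]
  rw [eq_neg_iff_add_eq_zero, ← integral_add (integrable_eval_gaussianPi _ _)
    (integrable_eval_gaussianPi _ _)]
  simp only [← map_add, hleibniz]
  exact integral_eval_chainDerivation hv m (f * g)

/-- `A^m` is antisymmetric in `L²(μ_β^N)`: for all polynomial
functions `f, g` on `ℝ^{ℤ/Nℤ}`, `∫ (A^m f)·g dμ_β^N = − ∫ f·(A^m g) dμ_β^N`. -/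
theorem stmt3 (N : ℕ) [NeZero N] (β : ℝ) (hβ : 0 < β)
    (m : ZMod N → ℝ) (hm : ∀ x, 0 < m x)
    (f g : MvPolynomial (ZMod N) ℝ) :
    ∫ ω, AgenTorus N m (fun w => MvPolynomial.eval w f) ω * MvPolynomial.eval ω g
        ∂(gaussTorus N β)
      = - ∫ ω, MvPolynomial.eval ω f * AgenTorus N m (fun w => MvPolynomial.eval w g) ω
          ∂(gaussTorus N β) :=
  stmt3_general N β hβ m f g

end
end
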